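/- arXiv:2505.22449 — 2 statements merged into one kernel-verified Lean document; each statement's English description precedes it below -/
import Mathlib

section
/- Fix 0 < b₂ < b₁. Let X ~ Lap(0, b₂), and let W be drawn independently as 0 with probability b₂²/b₁², and as Lap(0, b₁) otherwise. Then X + W ~ Lap(0, b₁). -/
/-!
Compare characteristic functions. The law `Lap(0, b)` has characteristic function
`1 / (1 + b² t²)`, so the mixture `W` has characteristic function
`b₂²/b₁² + (1 - b₂²/b₁²) / (1 + b₁² t²) = (1 + b₂² t²) / (1 + b₁² t²)`.
Multiplying by the characteristic function `1 / (1 + b₂² t²)` of `X` leaves that of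
`Lap(0, b₁)`, and a finite measure on `ℝ` is determined by its characteristic function.
-/

open MeasureTheory

/-- Density of the zero-centered Laplace distribution with scale `b`. -/
noncomputable def laplacePDFReal (b x : ℝ) : ℝ := (1 / (2 * b)) * Real.exp (-|x| / b)

/-- The zero-centered Laplace distribution with scale `b`. -/
noncomputable def laplaceMeasure (b : ℝ) : Measure ℝ :=
  volume.withDensity fun x => ENNReal.ofReal (laplacePDFReal b x)

/-- The mixture that is a point mass at `0` with probability `b₂² / b₁²` and
`Lap(0, b₁)` with the remaining probability. -/
noncomputable def lapBridge (b₂ b₁ : ℝ) : Measure ℝ :=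
  ENNReal.ofReal (b₂ ^ 2 / b₁ ^ 2) • Measure.dirac 0 +
    ENNReal.ofReal (1 - b₂ ^ 2 / b₁ ^ 2) • laplaceMeasure b₁

open Set Complex

section CharFun

variable {E : Type*} [NormedAddCommGroup E] [InnerProductSpace ℝ E] [MeasurableSpace E]
  {μ ν : Measure E}

lemma charFun_add_measure [OpensMeasurableSpace E] [IsFiniteMeasure μ] [IsFiniteMeasure ν]
    (t : E) :
    charFun (μ + ν) t = charFun μ t + charFun ν t := by
  simp_rw [charFun_apply]
  rw [integral_add_measure]
  all_goals exact (integrable_const (1 : ℝ)).mono (by fun_prop) (by simp)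

lemma charFun_smul_measure (c : ENNReal) (t : E) :
    charFun (c • μ) t = c.toReal * charFun μ t := by
  simp_rw [charFun_apply, integral_smul_measure, Complex.real_smul]

end CharFun

lemma charFun_withDensity_ofReal {f : ℝ → ℝ} (hf : Measurable f) (hf_nonneg : ∀ x, 0 ≤ f x)
    (t : ℝ) :
    charFun (volume.withDensity fun x => ENNReal.ofReal (f x)) t =
      ∫ x, f x * cexp (t * x * I) := by
  rw [charFun_apply_real, integral_withDensity_eq_integral_toReal_smul hf.ennreal_ofReal
    (ae_of_all _ fun _ => ENNReal.ofReal_lt_top)]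
  simp_rw [ENNReal.toReal_ofReal (hf_nonneg _), Complex.real_smul]

lemma measurable_laplacePDFReal (b : ℝ) : Measurable (laplacePDFReal b) := by
  unfold laplacePDFReal; fun_prop

lemma laplacePDFReal_nonneg {b : ℝ} (hb : 0 < b) (x : ℝ) : 0 ≤ laplacePDFReal b x := by
  unfold laplacePDFReal; positivity

lemma laplacePDFReal_of_nonpos {b x : ℝ} (hx : x ≤ 0) :
    laplacePDFReal b x = (2 * b)⁻¹ * Real.exp (b⁻¹ * x) := by
  rw [laplacePDFReal, abs_of_nonpos hx, one_div, neg_neg, div_eq_inv_mul]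

lemma laplacePDFReal_of_nonneg {b x : ℝ} (hx : 0 ≤ x) :
    laplacePDFReal b x = (2 * b)⁻¹ * Real.exp (-b⁻¹ * x) := by
  rw [laplacePDFReal, abs_of_nonneg hx, one_div, neg_div, div_eq_inv_mul, neg_mul]

lemma integrable_laplacePDFReal {b : ℝ} (hb : 0 < b) : Integrable (laplacePDFReal b) := by
  rw [← integrableOn_univ, ← Iic_union_Ioi (a := 0)]
  refine IntegrableOn.union ?_ ?_
  · exact IntegrableOn.congr_fun ((integrableOn_exp_mul_Iic (inv_pos.2 hb) 0).const_mul _)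
      (fun x hx => (laplacePDFReal_of_nonpos hx).symm) measurableSet_Iic
  · exact IntegrableOn.congr_fun
      ((integrableOn_exp_mul_Ioi (neg_lt_zero.2 (inv_pos.2 hb)) 0).const_mul _)
      (fun x hx => (laplacePDFReal_of_nonneg (le_of_lt hx)).symm) measurableSet_Ioi

lemma isFiniteMeasure_laplaceMeasure {b : ℝ} (hb : 0 < b) :
    IsFiniteMeasure (laplaceMeasure b) :=
  isFiniteMeasure_withDensity_ofReal (integrable_laplacePDFReal hb).2

lemma charFun_laplaceMeasure {b : ℝ} (hb : 0 < b) (t : ℝ) :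
    charFun (laplaceMeasure b) t = ((1 + b ^ 2 * t ^ 2)⁻¹ : ℝ) := by
  have hre : 0 < ((b : ℂ)⁻¹ + t * I).re := by simp [hb]
  have hre' : (-(b : ℂ)⁻¹ + t * I).re < 0 := by simp [hb]
  have hIic : ∀ x ∈ Iic (0 : ℝ), laplacePDFReal b x * cexp (t * x * I) =
      ((2 * b)⁻¹ : ℂ) * cexp (((b : ℂ)⁻¹ + t * I) * x) := by
    intro x hx
    rw [laplacePDFReal_of_nonpos hx]
    push_cast
    rw [mul_assoc, ← Complex.exp_add]
    ring_nf
  have hIoi : ∀ x ∈ Ioi (0 : ℝ), laplacePDFReal b x * cexp (t * x * I) =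
      ((2 * b)⁻¹ : ℂ) * cexp ((-(b : ℂ)⁻¹ + t * I) * x) := by
    intro x hx
    rw [laplacePDFReal_of_nonneg (le_of_lt hx)]
    push_cast
    rw [mul_assoc, ← Complex.exp_add]
    ring_nf
  rw [laplaceMeasure, charFun_withDensity_ofReal (measurable_laplacePDFReal b)
    (laplacePDFReal_nonneg hb), ← intervalIntegral.integral_Iic_add_Ioi
      (IntegrableOn.congr_fun ((integrableOn_exp_mul_complex_Iic hre 0).const_mul _)
        (fun x hx => (hIic x hx).symm) measurableSet_Iic)
      (IntegrableOn.congr_fun ((integrableOn_exp_mul_complex_Ioi hre' 0).const_mul _)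
        (fun x hx => (hIoi x hx).symm) measurableSet_Ioi),
    setIntegral_congr_fun measurableSet_Iic hIic, setIntegral_congr_fun measurableSet_Ioi hIoi,
    integral_const_mul, integral_const_mul, integral_exp_mul_complex_Iic hre,
    integral_exp_mul_complex_Ioi hre']
  have h1 : 1 + b * t * I ≠ 0 := fun h => by simpa using congrArg Complex.re h
  have h2 : -1 + b * t * I ≠ 0 := fun h => by simpa using congrArg Complex.re h
  have h3 : (1 + b ^ 2 * t ^ 2 : ℂ) ≠ 0 := by
    exact_mod_cast (by positivity : 1 + b ^ 2 * t ^ 2 ≠ 0)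
  have hb' : (b : ℂ) ≠ 0 := by exact_mod_cast hb.ne'
  simp only [Complex.ofReal_zero, mul_zero, Complex.exp_zero]
  push_cast
  field_simp
  linear_combination (-2 * b ^ 2 * t ^ 2) * I_sq

lemma isFiniteMeasure_lapBridge {b₁ : ℝ} (hb₁ : 0 < b₁) (b₂ : ℝ) :
    IsFiniteMeasure (lapBridge b₂ b₁) := by
  have := isFiniteMeasure_laplaceMeasure hb₁
  have := (Measure.dirac (0 : ℝ)).smul_finite (ENNReal.ofReal_ne_top (r := b₂ ^ 2 / b₁ ^ 2))
  have := (laplaceMeasure b₁).smul_finite (ENNReal.ofReal_ne_top (r := 1 - b₂ ^ 2 / b₁ ^ 2))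
  unfold lapBridge
  infer_instance

lemma charFun_lapBridge {b₁ b₂ : ℝ} (hb₁ : 0 < b₁) (hb : b₂ ^ 2 ≤ b₁ ^ 2) (t : ℝ) :
    charFun (lapBridge b₂ b₁) t = ((1 + b₂ ^ 2 * t ^ 2) / (1 + b₁ ^ 2 * t ^ 2) : ℝ) := by
  have := isFiniteMeasure_laplaceMeasure hb₁
  have hp : (ENNReal.ofReal (b₂ ^ 2 / b₁ ^ 2)).toReal = b₂ ^ 2 / b₁ ^ 2 :=
    ENNReal.toReal_ofReal (by positivity)
  have hq : (ENNReal.ofReal (1 - b₂ ^ 2 / b₁ ^ 2)).toReal = 1 - b₂ ^ 2 / b₁ ^ 2 :=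
    ENNReal.toReal_ofReal (by rwa [sub_nonneg, div_le_one (by positivity)])
  have := (Measure.dirac (0 : ℝ)).smul_finite (ENNReal.ofReal_ne_top (r := b₂ ^ 2 / b₁ ^ 2))
  have := (laplaceMeasure b₁).smul_finite (ENNReal.ofReal_ne_top (r := 1 - b₂ ^ 2 / b₁ ^ 2))
  rw [lapBridge, charFun_add_measure, charFun_smul_measure, charFun_smul_measure, charFun_dirac,
    charFun_laplaceMeasure hb₁, hp, hq]
  simp only [inner_zero_left, Complex.ofReal_zero, zero_mul, Complex.exp_zero, mul_one]
  norm_cast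
  field_simp
  ring

theorem stmt_9 (b₁ b₂ : ℝ) (hb₂ : 0 < b₂) (hb : b₂ < b₁) :
    Measure.conv (laplaceMeasure b₂) (lapBridge b₂ b₁) = laplaceMeasure b₁ := by
  have hb₁ : 0 < b₁ := hb₂.trans hb
  have := isFiniteMeasure_laplaceMeasure hb₁
  have := isFiniteMeasure_laplaceMeasure hb₂
  have := isFiniteMeasure_lapBridge hb₁ b₂
  refine Measure.ext_of_charFun (funext fun t => ?_)
  rw [charFun_conv, charFun_laplaceMeasure hb₂, charFun_laplaceMeasure hb₁,
    charFun_lapBridge hb₁ (pow_le_pow_left₀ hb₂.le hb.le 2)]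
  norm_cast
  field_simp
end

section
/- For distinct positive scale parameters b₁ ≠ b₂, the convolution of the Laplace densities f_{b₁} and f_{b₂} is (f_{b₁} ∗ f_{b₂})(t) = (1/(2(b₁² − b₂²)))·(b₁·e^{−|t|/b₁} − b₂·e^{−|t|/b₂}) for all t ∈ ℝ. -/
/-!
For `t ≥ 0` the integrand is a constant times the exponential of an affine function of `x` on each
of `(-∞, 0]`, `[0, t]` and `(t, ∞)`, so the integral is a sum of three elementary integrals; the
case `t < 0` reduces to this one because both densities are even.
-/

open MeasureTheory

open Set Real

section ExpAffine

variable {α β : ℝ}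

lemma integrableOn_exp_affine_Iic (hβ : 0 < β) (c : ℝ) :
    IntegrableOn (fun x => exp (α + β * x)) (Iic c) := by
  simp_rw [exp_add]
  exact (integrableOn_exp_mul_Iic hβ c).const_mul _

lemma integral_exp_affine_Iic (hβ : 0 < β) (c : ℝ) :
    ∫ x in Iic c, exp (α + β * x) = exp (α + β * c) / β := by
  simp only [exp_add, integral_const_mul, integral_exp_mul_Iic hβ, mul_div_assoc]

lemma integrableOn_exp_affine_Ioi (hβ : β < 0) (c : ℝ) :
    IntegrableOn (fun x => exp (α + β * x)) (Ioi c) := by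
  simp_rw [exp_add]
  exact (integrableOn_exp_mul_Ioi hβ c).const_mul _

lemma integral_exp_affine_Ioi (hβ : β < 0) (c : ℝ) :
    ∫ x in Ioi c, exp (α + β * x) = -exp (α + β * c) / β := by
  simp only [exp_add, integral_const_mul, integral_exp_mul_Ioi hβ, mul_div_assoc, mul_neg,
    neg_div]

lemma integral_exp_affine (hβ : β ≠ 0) (a b : ℝ) :
    ∫ x in a..b, exp (α + β * x) = (exp (α + β * b) - exp (α + β * a)) / β := by
  simp only [add_comm α, intervalIntegral.integral_comp_mul_add (fun x => exp x) hβ,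
    integral_exp, smul_eq_mul]
  field_simp

end ExpAffine

lemma integral_eq_setIntegral_Iic_add_intervalIntegral_add_setIntegral_Ioi
    {E : Type*} [NormedAddCommGroup E] [NormedSpace ℝ E] {μ : Measure ℝ} {f : ℝ → E} {a b : ℝ}
    (h_left : IntegrableOn f (Iic a) μ) (h_mid : IntervalIntegrable f μ a b)
    (h_right : IntegrableOn f (Ioi b) μ) :
    ∫ x, f x ∂μ = ∫ x in Iic a, f x ∂μ + ∫ x in a..b, f x ∂μ + ∫ x in Ioi b, f x ∂μ := by
  have h_Ioi : IntegrableOn f (Ioi a) μ := by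
    rcases le_total a b with hab | hba
    · rw [← Ioc_union_Ioi_eq_Ioi hab]
      exact ((intervalIntegrable_iff_integrableOn_Ioc_of_le hab).1 h_mid).union h_right
    · exact h_right.mono_set (Ioi_subset_Ioi hba)
  rw [add_assoc, intervalIntegral.integral_interval_add_Ioi' h_mid h_right,
    intervalIntegral.integral_Iic_add_Ioi h_left h_Ioi]

lemma integral_mul_comp_neg_sub_of_even {f g : ℝ → ℝ} (hf : f.Even) (hg : g.Even) (t : ℝ) :
    ∫ x, f x * g (-t - x) = ∫ x, f x * g (t - x) := by
  rw [← integral_neg_eq_self]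
  congr 1 with x
  rw [hf, ← hg (t - x)]
  ring_nf

lemma laplacePDFReal_even (b : ℝ) : (laplacePDFReal b).Even := fun x => by
  simp only [laplacePDFReal, abs_neg]

lemma continuous_laplacePDFReal (b : ℝ) : Continuous (laplacePDFReal b) := by
  unfold laplacePDFReal
  fun_prop

lemma laplacePDFReal_mul_laplacePDFReal (b₁ b₂ x y : ℝ) :
    laplacePDFReal b₁ x * laplacePDFReal b₂ y = (4 * b₁ * b₂)⁻¹ * exp (-|x| / b₁ - |y| / b₂) := by
  rw [laplacePDFReal, laplacePDFReal, mul_mul_mul_comm, ← exp_add]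
  congr 1
  · field_simp
    ring
  · congr 1
    ring

section ConvolutionPieces

variable {b₁ b₂ t : ℝ}

lemma laplacePDFReal_mul_sub_eqOn_Iic (ht : 0 ≤ t) :
    EqOn (fun x => laplacePDFReal b₁ x * laplacePDFReal b₂ (t - x))
      (fun x => (4 * b₁ * b₂)⁻¹ * exp (-t / b₂ + (b₁⁻¹ + b₂⁻¹) * x)) (Iic 0) :=
  fun x (hx : x ≤ 0) => by
    beta_reduce
    rw [laplacePDFReal_mul_laplacePDFReal, abs_of_nonpos hx, abs_of_nonneg (by linarith)]
    ring_nf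

lemma laplacePDFReal_mul_sub_eqOn_Icc :
    EqOn (fun x => laplacePDFReal b₁ x * laplacePDFReal b₂ (t - x))
      (fun x => (4 * b₁ * b₂)⁻¹ * exp (-t / b₂ + (b₂⁻¹ - b₁⁻¹) * x)) (Icc 0 t) :=
  fun x (hx : 0 ≤ x ∧ x ≤ t) => by
    beta_reduce
    rw [laplacePDFReal_mul_laplacePDFReal, abs_of_nonneg hx.1, abs_of_nonneg (by linarith)]
    ring_nf

lemma laplacePDFReal_mul_sub_eqOn_Ioi (ht : 0 ≤ t) :
    EqOn (fun x => laplacePDFReal b₁ x * laplacePDFReal b₂ (t - x))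
      (fun x => (4 * b₁ * b₂)⁻¹ * exp (t / b₂ + -(b₁⁻¹ + b₂⁻¹) * x)) (Ioi t) :=
  fun x (hx : t < x) => by
    beta_reduce
    rw [laplacePDFReal_mul_laplacePDFReal, abs_of_nonneg (by linarith), abs_of_nonpos (by linarith)]
    ring_nf

theorem integral_laplacePDFReal_mul_sub_of_nonneg (hb₁ : 0 < b₁) (hb₂ : 0 < b₂)
    (hne : b₁ ≠ b₂) (ht : 0 ≤ t) :
    ∫ x, laplacePDFReal b₁ x * laplacePDFReal b₂ (t - x) =
      (1 / (2 * (b₁ ^ 2 - b₂ ^ 2))) * (b₁ * exp (-t / b₁) - b₂ * exp (-t / b₂)) := by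
  have h_sum : 0 < b₁⁻¹ + b₂⁻¹ := by positivity
  have h_diff : b₂⁻¹ - b₁⁻¹ ≠ 0 := sub_ne_zero.2 (inv_injective.ne hne.symm)
  have h_left := laplacePDFReal_mul_sub_eqOn_Iic (b₁ := b₁) (b₂ := b₂) ht
  have h_mid := laplacePDFReal_mul_sub_eqOn_Icc (b₁ := b₁) (b₂ := b₂) (t := t)
  have h_right := laplacePDFReal_mul_sub_eqOn_Ioi (b₁ := b₁) (b₂ := b₂) ht
  rw [← uIcc_of_le ht] at h_mid
  have h_cont : Continuous fun x => laplacePDFReal b₁ x * laplacePDFReal b₂ (t - x) := by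
    have := continuous_laplacePDFReal b₁
    have := continuous_laplacePDFReal b₂
    fun_prop
  rw [integral_eq_setIntegral_Iic_add_intervalIntegral_add_setIntegral_Ioi
      (IntegrableOn.congr_fun ((integrableOn_exp_affine_Iic h_sum 0).const_mul _) h_left.symm
        measurableSet_Iic)
      (h_cont.intervalIntegrable 0 t)
      (IntegrableOn.congr_fun ((integrableOn_exp_affine_Ioi (neg_neg_of_pos h_sum) t).const_mul _)
        h_right.symm measurableSet_Ioi),
    setIntegral_congr_fun measurableSet_Iic h_left, intervalIntegral.integral_congr h_mid,
    setIntegral_congr_fun measurableSet_Ioi h_right, integral_const_mul, integral_const_mul,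
    intervalIntegral.integral_const_mul, integral_exp_affine_Iic h_sum,
    integral_exp_affine h_diff, integral_exp_affine_Ioi (neg_neg_of_pos h_sum),
    show -t / b₂ + (b₂⁻¹ - b₁⁻¹) * t = -t / b₁ by field_simp; ring,
    show t / b₂ + -(b₁⁻¹ + b₂⁻¹) * t = -t / b₁ by field_simp; ring]
  have h_sq : b₁ ^ 2 - b₂ ^ 2 ≠ 0 := by
    rw [sq_sub_sq]
    exact mul_ne_zero (by positivity) (sub_ne_zero.2 hne)
  simp only [mul_zero, add_zero]
  field_simp
  ring

end ConvolutionPieces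

theorem stmt_10 (b₁ b₂ : ℝ) (hb₁ : 0 < b₁) (hb₂ : 0 < b₂) (hne : b₁ ≠ b₂) (t : ℝ) :
    ∫ x, laplacePDFReal b₁ x * laplacePDFReal b₂ (t - x) =
      (1 / (2 * (b₁ ^ 2 - b₂ ^ 2))) *
        (b₁ * Real.exp (-|t| / b₁) - b₂ * Real.exp (-|t| / b₂)) := by
  rcases le_total 0 t with ht | ht
  · rw [abs_of_nonneg ht, integral_laplacePDFReal_mul_sub_of_nonneg hb₁ hb₂ hne ht]
  · rw [← integral_mul_comp_neg_sub_of_even (laplacePDFReal_even b₁) (laplacePDFReal_even b₂),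
      integral_laplacePDFReal_mul_sub_of_nonneg hb₁ hb₂ hne (neg_nonneg.2 ht), abs_of_nonpos ht]
end
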